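/- Let D₁ and D₂ be nonnegative identically distributed real-valued random variables on a common probability space with common survival function S(x) := P(D₁ > x), satisfying S(x) > 0 for all x. Assume S is regularly varying at infinity with tail index α > 1, i.e. for every x > 0, S(sx)/S(s) → x^{−α} as s → ∞, and assume the joint tail is negligible relative to the marginal tail: P(D₁ > x, D₂ > x)/S(x) → 0 as x → ∞. Then there exists a threshold t₀ ∈ (0,1) such that for all t ∈ [t₀, 1), F_{D₁+D₂}⁻¹(t) < F_{D₁}⁻¹(t) + F_{D₂}⁻¹(t); that is, the pooling effect is negative for all margin ratios at or above t₀. -/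

import Mathlib

open MeasureTheory ProbabilityTheory Set Filter Topology

/-!
Pick `a < 2` with `2 a^{-α} < 1` (possible because `α > 1`) and `b > 0` with `a + b < 2`.
If `D₁ + D₂ > (a + b) x` then `D₁ > a x`, or `D₂ > a x`, or both exceed `b x`; by regular
variation and the negligible joint tail, the probability of this is eventually at most
`(2 a^{-α} + o(1)) S(x) < S(x)`. At `x = F⁻¹(t)`, which tends to infinity as `t → 1`, this
gives `F_{D₁+D₂}((a + b) x) ≥ t`, hence `F_{D₁+D₂}⁻¹(t) ≤ (a + b) F⁻¹(t) < 2 F⁻¹(t)`.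
-/

/-- The quantile function of a distribution on `ℝ`: `F⁻¹(t) = inf {x | t ≤ F(x)}`. -/
noncomputable def quantile (μ : Measure ℝ) (t : ℝ) : ℝ :=
  sInf {x : ℝ | t ≤ cdf μ x}

section Quantile

variable (μ : Measure ℝ) {t : ℝ}

lemma nonempty_setOf_le_cdf (ht1 : t < 1) : {x : ℝ | t ≤ cdf μ x}.Nonempty :=
  ((tendsto_cdf_atTop μ).eventually (eventually_ge_nhds ht1)).exists

lemma bddBelow_setOf_le_cdf (ht0 : 0 < t) : BddBelow {x : ℝ | t ≤ cdf μ x} := by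
  obtain ⟨b, hb⟩ := eventually_atBot.mp
    ((tendsto_cdf_atBot μ).eventually (eventually_lt_nhds ht0))
  exact ⟨b, fun a ha => le_of_not_gt fun hab => (hb a hab.le).not_ge ha⟩

lemma le_cdf_quantile (ht0 : 0 < t) (ht1 : t < 1) : t ≤ cdf μ (quantile μ t) := by
  have h_above : ∀ x ∈ Ioi (quantile μ t), t ≤ cdf μ x := by
    intro x hx
    obtain ⟨a, ha, hax⟩ :=
      (csInf_lt_iff (bddBelow_setOf_le_cdf μ ht0) (nonempty_setOf_le_cdf μ ht1)).mp hx
    exact ha.trans (monotone_cdf μ hax.le)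
  have h_right : Tendsto (cdf μ) (𝓝[>] (quantile μ t)) (𝓝 (cdf μ (quantile μ t))) :=
    ((cdf μ).right_continuous _).mono_left (nhdsWithin_mono _ Ioi_subset_Ici_self)
  exact ge_of_tendsto h_right (eventually_nhdsWithin_of_forall h_above)

lemma quantile_le_iff (ht0 : 0 < t) (ht1 : t < 1) {x : ℝ} :
    quantile μ t ≤ x ↔ t ≤ cdf μ x :=
  ⟨fun h => (le_cdf_quantile μ ht0 ht1).trans (monotone_cdf μ h),
    fun h => csInf_le (bddBelow_setOf_le_cdf μ ht0) h⟩

lemma lt_quantile_of_cdf_lt (ht0 : 0 < t) (ht1 : t < 1) {x : ℝ} (h : cdf μ x < t) :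
    x < quantile μ t :=
  lt_of_not_ge fun hq => h.not_ge ((quantile_le_iff μ ht0 ht1).mp hq)

end Quantile

lemma exists_forall_quantile_lt_add_self {μ ν : Measure ℝ} (hμ : ∀ x, cdf μ x < 1)
    {c : ℝ} (hc : c < 2) (h : ∀ᶠ x in atTop, cdf μ x ≤ cdf ν (c * x)) :
    ∃ t₀ ∈ Ioo (0 : ℝ) 1, ∀ t ∈ Ico t₀ 1, quantile ν t < quantile μ t + quantile μ t := by
  obtain ⟨x₀, hx₀⟩ := eventually_atTop.mp h
  set x₁ := max x₀ 0
  have hF₀ := cdf_nonneg μ x₁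
  have hF₁ := hμ x₁
  refine ⟨(1 + cdf μ x₁) / 2, ⟨by linarith, by linarith⟩, fun t ⟨ht₀, ht1⟩ => ?_⟩
  have ht0 : 0 < t := by linarith
  set q := quantile μ t
  have hq : x₁ < q := lt_quantile_of_cdf_lt μ ht0 ht1 (by linarith)
  have hq0 : 0 < q := (le_max_right _ _).trans_lt hq
  have hνq : quantile ν t ≤ c * q :=
    (quantile_le_iff ν ht0 ht1).mpr
      ((le_cdf_quantile μ ht0 ht1).trans (hx₀ q ((le_max_left _ _).trans hq.le)))
  calc quantile ν t ≤ c * q := hνq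
    _ < 2 * q := mul_lt_mul_of_pos_right hc hq0
    _ = q + q := two_mul q

lemma cdf_map_eq_one_sub {Ω : Type*} [MeasurableSpace Ω] (P : Measure Ω)
    [IsProbabilityMeasure P] {X : Ω → ℝ} (hX : Measurable X) (x : ℝ) :
    cdf (P.map X) x = 1 - P.real {ω | x < X ω} := by
  have := Measure.isProbabilityMeasure_map (μ := P) hX.aemeasurable
  have hcompl : {ω | x < X ω} = (X ⁻¹' Iic x)ᶜ := by ext; simp
  rw [hcompl, probReal_compl_eq_one_sub (hX measurableSet_Iic), sub_sub_cancel, cdf_eq_real,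
    map_measureReal_apply hX measurableSet_Iic]

lemma lt_or_lt_or_lt_and_lt_of_add_lt_add {α : Type*} [AddCommMonoid α] [LinearOrder α]
    [IsOrderedAddMonoid α] {u v a b : α} (h : u + v < a + b) :
    (u < a ∨ u < b) ∨ (v < a ∧ v < b) := by
  by_contra! hc
  obtain ⟨⟨hau, hbu⟩, hv⟩ := hc
  refine h.not_ge ?_
  rcases le_or_gt a v with hav | hva
  · calc a + b ≤ v + u := add_le_add hav hbu
      _ = u + v := add_comm v u
  · exact add_le_add hau (hv hva)

lemma measureReal_add_gt_le {Ω : Type*} [MeasurableSpace Ω] (P : Measure Ω)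
    [IsFiniteMeasure P] (X Y : Ω → ℝ) (u v : ℝ) :
    P.real {ω | u + v < X ω + Y ω} ≤
      P.real {ω | u < X ω} + P.real {ω | u < Y ω} + P.real {ω | v < X ω ∧ v < Y ω} :=
  calc P.real {ω | u + v < X ω + Y ω}
      ≤ P.real ({ω | u < X ω} ∪ {ω | u < Y ω} ∪ {ω | v < X ω ∧ v < Y ω}) :=
        measureReal_mono fun _ hω => lt_or_lt_or_lt_and_lt_of_add_lt_add (α := ℝ) hω
    _ ≤ _ := (measureReal_union_le _ _).trans (add_le_add_left (measureReal_union_le _ _) _)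

lemma tendsto_comp_mul_div_of_tendsto_div {f S : ℝ → ℝ} (hS : ∀ x, S x ≠ 0) {b M : ℝ}
    (hb : 0 < b) (hf : Tendsto (fun x => f x / S x) atTop (𝓝 0))
    (hSb : Tendsto (fun x => S (x * b) / S x) atTop (𝓝 M)) :
    Tendsto (fun x => f (x * b) / S x) atTop (𝓝 0) := by
  have h := (hf.comp (tendsto_id.atTop_mul_const hb)).mul hSb
  rw [zero_mul] at h
  refine h.congr fun x => ?_
  simp only [Function.comp_apply, id]
  rw [div_mul_div_cancel₀ (hS (x * b))]

lemma eventually_measureReal_add_gt_lt {Ω : Type*} [MeasurableSpace Ω] (P : Measure Ω)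
    [IsFiniteMeasure P] {X Y : Ω → ℝ} {S : ℝ → ℝ}
    (hX : ∀ x, P.real {ω | x < X ω} = S x) (hY : ∀ x, P.real {ω | x < Y ω} = S x)
    (hSpos : ∀ x, 0 < S x) {a b L : ℝ} (hL : 2 * L < 1)
    (ha : Tendsto (fun x => S (x * a) / S x) atTop (𝓝 L))
    (hjoint : Tendsto (fun x => P.real {ω | x * b < X ω ∧ x * b < Y ω} / S x) atTop (𝓝 0)) :
    ∀ᶠ x in atTop, P.real {ω | (a + b) * x < X ω + Y ω} < S x := by
  have hlim := (ha.const_mul 2).add hjoint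
  rw [add_zero] at hlim
  filter_upwards [hlim.eventually (eventually_lt_nhds hL)] with x hx
  have hratio : (2 * S (x * a) + P.real {ω | x * b < X ω ∧ x * b < Y ω}) / S x < 1 := by
    rwa [add_div, mul_div_assoc]
  calc P.real {ω | (a + b) * x < X ω + Y ω}
      ≤ P.real {ω | x * a < X ω} + P.real {ω | x * a < Y ω}
          + P.real {ω | x * b < X ω ∧ x * b < Y ω} := by
        rw [show (a + b) * x = x * a + x * b by ring]
        exact measureReal_add_gt_le P X Y _ _
    _ = 2 * S (x * a) + P.real {ω | x * b < X ω ∧ x * b < Y ω} := by rw [hX, hY]; ring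
    _ < S x := (div_lt_one (hSpos x)).mp hratio

lemma exists_two_mul_rpow_neg_lt_one {α : ℝ} (hα : 1 < α) :
    ∃ a : ℝ, 0 < a ∧ a < 2 ∧ 2 * a ^ (-α) < 1 := by
  have h2 : 2 * (2 : ℝ) ^ (-α) < 1 := by
    have := Real.rpow_lt_rpow_of_exponent_lt one_lt_two (neg_lt_neg hα)
    rw [Real.rpow_neg_one] at this
    linarith
  have hcont : ContinuousAt (fun a : ℝ => 2 * a ^ (-α)) 2 :=
    continuousAt_const.mul (Real.continuousAt_rpow_const _ _ (Or.inl two_ne_zero))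
  obtain ⟨a, hlt, ha1, ha2⟩ :=
    (((hcont.tendsto.mono_left nhdsWithin_le_nhds).eventually (eventually_lt_nhds h2)).and
      (Ioo_mem_nhdsLT (one_lt_two : (1 : ℝ) < 2))).exists
  exact ⟨a, one_pos.trans ha1, ha2, hlt⟩

theorem pooling_effect_neg_of_regularly_varying_general {Ω : Type*} [MeasurableSpace Ω]
    (P : Measure Ω) [IsProbabilityMeasure P] (D₁ D₂ : Ω → ℝ)
    (hD₁ : Measurable D₁) (hD₂ : Measurable D₂)
    (hid : Measure.map D₁ P = Measure.map D₂ P)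
    (S : ℝ → ℝ) (hS : ∀ x, S x = (P {ω | x < D₁ ω}).toReal)
    (hSpos : ∀ x, 0 < S x)
    (α : ℝ) (hα : 1 < α)
    (hreg : ∀ x > (0 : ℝ), Tendsto (fun s => S (s * x) / S s) atTop (𝓝 (x ^ (-α))))
    (hjoint : Tendsto (fun x => (P {ω | x < D₁ ω ∧ x < D₂ ω}).toReal / S x) atTop (𝓝 0)) :
    ∃ t₀ ∈ Set.Ioo (0 : ℝ) 1, ∀ t ∈ Set.Ico t₀ 1,
      quantile (Measure.map (fun ω => D₁ ω + D₂ ω) P) t <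
        quantile (Measure.map D₁ P) t + quantile (Measure.map D₂ P) t := by
  have hS₁ : ∀ x, P.real {ω | x < D₁ ω} = S x := fun x => (hS x).symm
  have hF₁ : ∀ x, cdf (P.map D₁) x = 1 - S x := fun x => by
    rw [cdf_map_eq_one_sub P hD₁, hS₁]
  have hS₂ : ∀ x, P.real {ω | x < D₂ ω} = S x := fun x => by
    have h := cdf_map_eq_one_sub P hD₂ x
    rw [← hid, hF₁] at h
    linarith
  obtain ⟨a, ha0, ha2, haα⟩ := exists_two_mul_rpow_neg_lt_one hα
  obtain ⟨b, hb, hab⟩ : ∃ b : ℝ, 0 < b ∧ a + b < 2 := ⟨(2 - a) / 2, by linarith, by linarith⟩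
  have htail := eventually_measureReal_add_gt_lt P hS₁ hS₂ hSpos haα (hreg a ha0)
    (tendsto_comp_mul_div_of_tendsto_div (fun x => (hSpos x).ne') hb hjoint (hreg b hb))
  rw [← hid]
  refine exists_forall_quantile_lt_add_self (c := a + b)
    (fun x => by linarith [hF₁ x, hSpos x]) hab ?_
  filter_upwards [htail] with x hx
  rw [hF₁, cdf_map_eq_one_sub P (by fun_prop)]
  linarith

/-- For identically distributed nonnegative demands with regularly varying tails of index
`α > 1` and negligible joint tail, the pooling effect is negative for all margin ratios at
or above some threshold `t₀ ∈ (0,1)`. -/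
theorem pooling_effect_neg_of_regularly_varying {Ω : Type*} [MeasurableSpace Ω]
    (P : Measure Ω) [IsProbabilityMeasure P] (D₁ D₂ : Ω → ℝ)
    (hD₁ : Measurable D₁) (hD₂ : Measurable D₂)
    (hnn₁ : ∀ ω, 0 ≤ D₁ ω) (hnn₂ : ∀ ω, 0 ≤ D₂ ω)
    (hid : Measure.map D₁ P = Measure.map D₂ P)
    (S : ℝ → ℝ) (hS : ∀ x, S x = (P {ω | x < D₁ ω}).toReal)
    (hSpos : ∀ x, 0 < S x)
    (α : ℝ) (hα : 1 < α)
    (hreg : ∀ x > (0 : ℝ), Tendsto (fun s => S (s * x) / S s) atTop (𝓝 (x ^ (-α))))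
    (hjoint : Tendsto (fun x => (P {ω | x < D₁ ω ∧ x < D₂ ω}).toReal / S x) atTop (𝓝 0)) :
    ∃ t₀ ∈ Set.Ioo (0 : ℝ) 1, ∀ t ∈ Set.Ico t₀ 1,
      quantile (Measure.map (fun ω => D₁ ω + D₂ ω) P) t <
        quantile (Measure.map D₁ P) t + quantile (Measure.map D₂ P) t :=
  pooling_effect_neg_of_regularly_varying_general P D₁ D₂ hD₁ hD₂ hid S hS hSpos α hα hreg hjoint
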